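/- For any matrices W ∈ R^{m×k}, H ∈ R^{n×k} with X = W H^T, one has ‖X‖_* ≤ ‖U^T W‖_F ‖V^T H‖_F ≤ (1/2)(‖W‖_F² + ‖H‖_F²), where U, V are the matrices of left/right singular vectors of X corresponding to its positive singular values. -/

import Mathlib

open Matrix

theorem Matrix.isHermitian_transpose_mul_self {m n α : Type*} [Fintype m] [CommSemiring α]
    [StarRing α] [TrivialStar α] (A : Matrix m n α) : (Aᵀ * A).IsHermitian := by
  rw [IsHermitian, conjTranspose_eq_transpose_of_trivial, transpose_mul, transpose_transpose]

noncomputable def frobNorm {m n : ℕ} (X : Matrix (Fin m) (Fin n) ℝ) : ℝ :=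
  Real.sqrt (∑ i, ∑ j, (X i j) ^ 2)

noncomputable def nuclearNorm {m n : ℕ} (X : Matrix (Fin m) (Fin n) ℝ) : ℝ :=
  ∑ i, Real.sqrt ((Matrix.isHermitian_transpose_mul_self X).eigenvalues i)

/-! The singular value decomposition gives `diag σ = (Uᵀ W) (Vᵀ H)ᵀ`, so `‖X‖_* = ∑ σᵢ` is the
Frobenius inner product of `Uᵀ W` and `Vᵀ H` and Cauchy–Schwarz gives the first inequality.
Multiplying by `Uᵀ` with orthonormal columns does not increase the Frobenius norm, so the second
inequality is AM–GM. -/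

namespace Matrix

variable {l m n : Type*} [Fintype l] [Fintype m] [DecidableEq l]

lemma sum_sum_sq_eq_trace_transpose_mul [Fintype n] (A : Matrix m n ℝ) :
    ∑ i, ∑ j, A i j ^ 2 = (Aᵀ * A).trace := by
  simp only [trace, diag, mul_apply, transpose_apply, sq]
  exact Finset.sum_comm

lemma trace_mul_transpose_eq_sum_sum [Fintype n] (A B : Matrix m n ℝ) :
    (A * Bᵀ).trace = ∑ i, ∑ j, A i j * B i j := by
  simp [trace, mul_apply]

lemma trace_transpose_mul_self_nonneg [Fintype n] (A : Matrix m n ℝ) :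
    0 ≤ (Aᵀ * A).trace := by
  rw [← sum_sum_sq_eq_trace_transpose_mul]
  positivity

lemma transpose_mul_cancel_left_of_orthonormal {U : Matrix m l ℝ} (hU : Uᵀ * U = 1)
    (A : Matrix l n ℝ) : Uᵀ * (U * A) = A := by
  rw [← Matrix.mul_assoc, hU, Matrix.one_mul]

/-- Pythagoras for the orthogonal projection `U Uᵀ` onto the column space of `U`. -/
lemma transpose_mul_self_eq_add_of_orthonormal {U : Matrix m l ℝ} (hU : Uᵀ * U = 1)
    (W : Matrix m n ℝ) :
    Wᵀ * W = (Uᵀ * W)ᵀ * (Uᵀ * W) + (W - U * (Uᵀ * W))ᵀ * (W - U * (Uᵀ * W)) := by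
  simp only [transpose_sub, transpose_mul, transpose_transpose, Matrix.sub_mul, Matrix.mul_sub,
    Matrix.mul_assoc, transpose_mul_cancel_left_of_orthonormal hU]
  abel

lemma trace_transpose_mul_le_of_orthonormal [Fintype n] {U : Matrix m l ℝ} (hU : Uᵀ * U = 1)
    (W : Matrix m n ℝ) : ((Uᵀ * W)ᵀ * (Uᵀ * W)).trace ≤ (Wᵀ * W).trace := by
  rw [transpose_mul_self_eq_add_of_orthonormal hU W, trace_add]
  linarith [trace_transpose_mul_self_nonneg (W - U * (Uᵀ * W))]

end Matrix

section FrobeniusNorm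

variable {p q r : ℕ}

lemma frobNorm_nonneg (A : Matrix (Fin p) (Fin q) ℝ) : 0 ≤ frobNorm A :=
  Real.sqrt_nonneg _

lemma frobNorm_eq_sqrt_trace (A : Matrix (Fin p) (Fin q) ℝ) :
    frobNorm A = Real.sqrt (Aᵀ * A).trace := by
  rw [frobNorm, sum_sum_sq_eq_trace_transpose_mul]

lemma trace_mul_transpose_le_frobNorm_mul (A B : Matrix (Fin p) (Fin q) ℝ) :
    (A * Bᵀ).trace ≤ frobNorm A * frobNorm B := by
  have h := Real.sum_mul_le_sqrt_mul_sqrt Finset.univ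
    (fun x : Fin p × Fin q => A x.1 x.2) (fun x => B x.1 x.2)
  simp only [← Finset.univ_product_univ, Finset.sum_product] at h
  rwa [trace_mul_transpose_eq_sum_sum, frobNorm, frobNorm]

lemma frobNorm_transpose_mul_le_of_orthonormal {U : Matrix (Fin p) (Fin r) ℝ}
    (hU : Uᵀ * U = 1) (W : Matrix (Fin p) (Fin q) ℝ) : frobNorm (Uᵀ * W) ≤ frobNorm W := by
  rw [frobNorm_eq_sqrt_trace, frobNorm_eq_sqrt_trace]
  exact Real.sqrt_le_sqrt (trace_transpose_mul_le_of_orthonormal hU W)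

end FrobeniusNorm

section NuclearNorm

open scoped MatrixOrder

lemma Matrix.PosSemidef.trace_sqrt {n : Type*} [Fintype n] [DecidableEq n]
    {A : Matrix n n ℝ} (hA : A.PosSemidef) :
    (CFC.sqrt A).trace = ∑ i, Real.sqrt (hA.1.eigenvalues i) := by
  rw [CFC.sqrt_eq_cfc, cfc_nnreal_eq_real _ A, hA.1.cfc_eq]
  simp only [IsHermitian.cfc, Unitary.conjStarAlgAut_apply]
  rw [trace_mul_cycle, Unitary.coe_star_mul_self, Matrix.one_mul, trace_diagonal]
  simp [hA.eigenvalues_nonneg]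

lemma nuclearNorm_eq_trace_sqrt {m n : ℕ} (X : Matrix (Fin m) (Fin n) ℝ) :
    nuclearNorm X = (CFC.sqrt (Xᴴ * X)).trace :=
  ((posSemidef_conjTranspose_mul_self X).trace_sqrt).symm

lemma sqrt_conjTranspose_mul_self_of_svd {m n r : ℕ} {U : Matrix (Fin m) (Fin r) ℝ}
    {V : Matrix (Fin n) (Fin r) ℝ} {σ : Fin r → ℝ} (hU : Uᵀ * U = 1) (hV : Vᵀ * V = 1)
    (hσ : ∀ i, 0 ≤ σ i) :
    CFC.sqrt ((U * diagonal σ * Vᵀ)ᴴ * (U * diagonal σ * Vᵀ)) = V * diagonal σ * Vᵀ := by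
  have hpsd : (V * diagonal σ * Vᵀ).PosSemidef := by
    simpa using (PosSemidef.diagonal (d := σ) hσ).mul_mul_conjTranspose_same V
  rw [CFC.sqrt_eq_iff _ _ (posSemidef_conjTranspose_mul_self _).nonneg hpsd.nonneg]
  simp only [conjTranspose_eq_transpose_of_trivial, transpose_mul, transpose_transpose,
    diagonal_transpose, Matrix.mul_assoc, transpose_mul_cancel_left_of_orthonormal hU,
    transpose_mul_cancel_left_of_orthonormal hV]

lemma nuclearNorm_mul_diagonal_mul_transpose {m n r : ℕ} {U : Matrix (Fin m) (Fin r) ℝ}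
    {V : Matrix (Fin n) (Fin r) ℝ} {σ : Fin r → ℝ} (hU : Uᵀ * U = 1) (hV : Vᵀ * V = 1)
    (hσ : ∀ i, 0 ≤ σ i) : nuclearNorm (U * diagonal σ * Vᵀ) = ∑ i, σ i := by
  rw [nuclearNorm_eq_trace_sqrt, sqrt_conjTranspose_mul_self_of_svd hU hV hσ, trace_mul_cycle, hV,
    Matrix.one_mul, trace_diagonal]

end NuclearNorm

theorem nuclearNorm_le_factorization_general {m n r k : ℕ}
    (X : Matrix (Fin m) (Fin n) ℝ)
    (U : Matrix (Fin m) (Fin r) ℝ) (V : Matrix (Fin n) (Fin r) ℝ) (σ : Fin r → ℝ)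
    (hU : Uᵀ * U = 1) (hV : Vᵀ * V = 1) (hσ : ∀ i, 0 < σ i)
    (hSVD : X = U * Matrix.diagonal σ * Vᵀ)
    (W : Matrix (Fin m) (Fin k) ℝ) (H : Matrix (Fin n) (Fin k) ℝ)
    (hWH : W * Hᵀ = X) :
    nuclearNorm X ≤ frobNorm (Uᵀ * W) * frobNorm (Vᵀ * H) ∧
      frobNorm (Uᵀ * W) * frobNorm (Vᵀ * H) ≤ (1 / 2) * (frobNorm W ^ 2 + frobNorm H ^ 2) := by
  have hdiag : diagonal σ = (Uᵀ * W) * (Vᵀ * H)ᵀ := by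
    rw [transpose_mul, transpose_transpose, Matrix.mul_assoc, ← Matrix.mul_assoc W, hWH, hSVD]
    simp only [Matrix.mul_assoc, hV, Matrix.mul_one,
      transpose_mul_cancel_left_of_orthonormal hU]
  constructor
  · calc nuclearNorm X = ∑ i, σ i := by
          rw [hSVD, nuclearNorm_mul_diagonal_mul_transpose hU hV fun i => (hσ i).le]
      _ = ((Uᵀ * W) * (Vᵀ * H)ᵀ).trace := by rw [← hdiag, trace_diagonal]
      _ ≤ frobNorm (Uᵀ * W) * frobNorm (Vᵀ * H) := trace_mul_transpose_le_frobNorm_mul _ _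
  · calc frobNorm (Uᵀ * W) * frobNorm (Vᵀ * H) ≤ frobNorm W * frobNorm H :=
          mul_le_mul (frobNorm_transpose_mul_le_of_orthonormal hU W)
            (frobNorm_transpose_mul_le_of_orthonormal hV H) (frobNorm_nonneg _) (frobNorm_nonneg _)
      _ ≤ (1 / 2) * (frobNorm W ^ 2 + frobNorm H ^ 2) := by
          linarith [two_mul_le_add_sq (frobNorm W) (frobNorm H)]

/-- For any factorization `X = W Hᵀ`,
`‖X‖_* ≤ ‖Uᵀ W‖_F ‖Vᵀ H‖_F ≤ (1/2)(‖W‖_F² + ‖H‖_F²)`,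
where `U, V` are the singular vector matrices of `X` for its positive singular values. -/
theorem nuclearNorm_le_factorization {m n r k : ℕ}
    (X : Matrix (Fin m) (Fin n) ℝ)
    (U : Matrix (Fin m) (Fin r) ℝ) (V : Matrix (Fin n) (Fin r) ℝ) (σ : Fin r → ℝ)
    (hU : Uᵀ * U = 1) (hV : Vᵀ * V = 1) (hσ : ∀ i, 0 < σ i)
    (hSVD : X = U * Matrix.diagonal σ * Vᵀ)
    (hrank : X.rank = r)
    (W : Matrix (Fin m) (Fin k) ℝ) (H : Matrix (Fin n) (Fin k) ℝ)
    (hWH : W * Hᵀ = X) :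
    nuclearNorm X ≤ frobNorm (Uᵀ * W) * frobNorm (Vᵀ * H) ∧
      frobNorm (Uᵀ * W) * frobNorm (Vᵀ * H) ≤ (1 / 2) * (frobNorm W ^ 2 + frobNorm H ^ 2) :=
  nuclearNorm_le_factorization_general X U V σ hU hV hσ hSVD W H hWH
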